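/- Let C be a bounded linear operator on a complex Hilbert space H, and let S be the operator on H ⊕ H given by the 2×2 operator matrix with zero diagonal entries and both off-diagonal entries equal to C. Then w(S) = w(C), where w denotes the numerical radius. -/

import Mathlib

/-!
Write `z = (x, y)`, so that `⟪S z, z⟫ = ⟪C y, x⟫ + ⟪C x, y⟫`. By polarization this is half of
`⟪C (x + y), x + y⟫ - ⟪C (x - y), x - y⟫`, and the parallelogram law bounds it by
`w(C) ‖z‖²`, so `w(S) ≤ w(C)`. Conversely the diagonal vector `z = (x, x)` has
`⟪S z, z⟫ = 2 ⟪C x, x⟫` and `‖z‖² = 2 ‖x‖²`, so `w(C) ≤ w(S)`.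
-/

/-- The numerical radius of a bounded linear operator. -/
noncomputable def numRadius {E : Type*} [NormedAddCommGroup E] [InnerProductSpace ℂ E]
    (T : E →L[ℂ] E) : ℝ :=
  ⨆ x : {x : E // ‖x‖ = 1}, ‖(inner ℂ (T x.val) x.val : ℂ)‖

/-- The 2×2 operator matrix `[[0, C],[D, 0]]` acting on `H ⊕ H` (as `WithLp 2 (H × H)`)
by `(x, y) ↦ (C y, D x)`. -/
noncomputable def offDiagOp {H : Type*} [NormedAddCommGroup H] [InnerProductSpace ℂ H]
    (C D : H →L[ℂ] H) : WithLp 2 (H × H) →L[ℂ] WithLp 2 (H × H) :=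
  ((WithLp.prodContinuousLinearEquiv 2 ℂ H H).symm : (H × H) →L[ℂ] WithLp 2 (H × H)) ∘L
    ((C ∘L ContinuousLinearMap.snd ℂ H H).prod (D ∘L ContinuousLinearMap.fst ℂ H H)) ∘L
    ((WithLp.prodContinuousLinearEquiv 2 ℂ H H) : WithLp 2 (H × H) →L[ℂ] (H × H))

open scoped InnerProductSpace

section NumRadius

variable {E : Type*} [NormedAddCommGroup E] [InnerProductSpace ℂ E]

lemma numRadius_nonneg (T : E →L[ℂ] E) : 0 ≤ numRadius T :=
  Real.iSup_nonneg fun _ => norm_nonneg _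

lemma numRadius_bddAbove (T : E →L[ℂ] E) :
    BddAbove (Set.range fun x : {x : E // ‖x‖ = 1} => ‖⟪T x.val, x.val⟫_ℂ‖) := by
  refine ⟨‖T‖, ?_⟩
  rintro r ⟨⟨x, hx⟩, rfl⟩
  calc ‖⟪T x, x⟫_ℂ‖ ≤ ‖T x‖ * ‖x‖ := norm_inner_le_norm _ _
    _ ≤ ‖T‖ * ‖x‖ * ‖x‖ := by gcongr; exact T.le_opNorm x
    _ = ‖T‖ := by rw [hx, mul_one, mul_one]

lemma norm_inner_self_le_numRadius (T : E →L[ℂ] E) {x : E} (hx : ‖x‖ = 1) :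
    ‖⟪T x, x⟫_ℂ‖ ≤ numRadius T :=
  le_ciSup (numRadius_bddAbove T) (⟨x, hx⟩ : {x : E // ‖x‖ = 1})

lemma norm_inner_self_le_numRadius_mul_sq (T : E →L[ℂ] E) (x : E) :
    ‖⟪T x, x⟫_ℂ‖ ≤ numRadius T * ‖x‖ ^ 2 := by
  rcases eq_or_ne x 0 with rfl | hx
  · simp
  have hx' : ‖x‖ ≠ 0 := norm_ne_zero_iff.mpr hx
  have hxC : (‖x‖ : ℂ) ≠ 0 := Complex.ofReal_ne_zero.mpr hx'
  set u : E := (‖x‖⁻¹ : ℂ) • x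
  have hu : ‖u‖ = 1 := by simp [u, norm_smul, hx']
  have hinner : ⟪T x, x⟫_ℂ = (‖x‖ ^ 2 : ℂ) * ⟪T u, u⟫_ℂ := by
    simp only [u, map_smul, inner_smul_left, inner_smul_right, map_inv₀, Complex.conj_ofReal]
    field_simp
  rw [hinner, norm_mul, mul_comm]
  simp only [norm_pow, Complex.norm_real, norm_norm]
  gcongr
  exact norm_inner_self_le_numRadius T hu

lemma numRadius_le_of_norm_inner_self_le {T : E →L[ℂ] E} {c : ℝ} (hc : 0 ≤ c)
    (h : ∀ x, ‖⟪T x, x⟫_ℂ‖ ≤ c * ‖x‖ ^ 2) : numRadius T ≤ c :=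
  Real.iSup_le (fun ⟨x, hx⟩ => by simpa [hx] using h x) hc

end NumRadius

section OffDiagOp

variable {H : Type*} [NormedAddCommGroup H] [InnerProductSpace ℂ H]

lemma inner_offDiagOp_self (C D : H →L[ℂ] H) (z : WithLp 2 (H × H)) :
    ⟪offDiagOp C D z, z⟫_ℂ = ⟪C z.snd, z.fst⟫_ℂ + ⟪D z.fst, z.snd⟫_ℂ :=
  rfl

lemma two_mul_inner_add_inner_eq (C : H →L[ℂ] H) (x y : H) :
    2 * (⟪C y, x⟫_ℂ + ⟪C x, y⟫_ℂ) = ⟪C (x + y), x + y⟫_ℂ - ⟪C (x - y), x - y⟫_ℂ := by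
  simp only [map_add, map_sub, inner_add_left, inner_add_right, inner_sub_left,
    inner_sub_right]
  ring

lemma norm_inner_add_inner_le_numRadius (C : H →L[ℂ] H) (x y : H) :
    ‖⟪C y, x⟫_ℂ + ⟪C x, y⟫_ℂ‖ ≤ numRadius C * (‖x‖ ^ 2 + ‖y‖ ^ 2) := by
  have hpar : ‖x + y‖ ^ 2 + ‖x - y‖ ^ 2 = 2 * (‖x‖ ^ 2 + ‖y‖ ^ 2) := by
    linarith [parallelogram_law_with_norm ℂ x y]
  have := calc
    2 * ‖⟪C y, x⟫_ℂ + ⟪C x, y⟫_ℂ‖ = ‖⟪C (x + y), x + y⟫_ℂ - ⟪C (x - y), x - y⟫_ℂ‖ := by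
        rw [← two_mul_inner_add_inner_eq, norm_mul]; norm_num
    _ ≤ ‖⟪C (x + y), x + y⟫_ℂ‖ + ‖⟪C (x - y), x - y⟫_ℂ‖ := norm_sub_le _ _
    _ ≤ numRadius C * ‖x + y‖ ^ 2 + numRadius C * ‖x - y‖ ^ 2 :=
        add_le_add (norm_inner_self_le_numRadius_mul_sq C _)
          (norm_inner_self_le_numRadius_mul_sq C _)
    _ = 2 * (numRadius C * (‖x‖ ^ 2 + ‖y‖ ^ 2)) := by rw [← mul_add, hpar]; ring
  linarith

lemma numRadius_offDiagOp_self_le (C : H →L[ℂ] H) :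
    numRadius (offDiagOp C C) ≤ numRadius C := by
  refine numRadius_le_of_norm_inner_self_le (numRadius_nonneg C) fun z => ?_
  rw [inner_offDiagOp_self, WithLp.prod_norm_sq_eq_of_L2]
  exact norm_inner_add_inner_le_numRadius C z.fst z.snd

lemma numRadius_le_numRadius_offDiagOp_self (C : H →L[ℂ] H) :
    numRadius C ≤ numRadius (offDiagOp C C) := by
  refine numRadius_le_of_norm_inner_self_le (numRadius_nonneg _) fun x => ?_
  set z : WithLp 2 (H × H) := WithLp.toLp 2 (x, x)
  have hz : ‖z‖ ^ 2 = 2 * ‖x‖ ^ 2 := by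
    rw [WithLp.prod_norm_sq_eq_of_L2]; simp only [z, WithLp.toLp_fst, WithLp.toLp_snd]; ring
  have hinner : ⟪offDiagOp C C z, z⟫_ℂ = 2 * ⟪C x, x⟫_ℂ := by
    rw [inner_offDiagOp_self]; simp only [z, WithLp.toLp_fst, WithLp.toLp_snd]; ring
  have := norm_inner_self_le_numRadius_mul_sq (offDiagOp C C) z
  rw [hinner, hz, norm_mul] at this
  norm_num at this
  linarith

end OffDiagOp

theorem stmt_14_general {H : Type*} [NormedAddCommGroup H] [InnerProductSpace ℂ H]
    (C : H →L[ℂ] H) :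
    numRadius (offDiagOp C C) = numRadius C :=
  le_antisymm (numRadius_offDiagOp_self_le C) (numRadius_le_numRadius_offDiagOp_self C)

theorem stmt_14 {H : Type*} [NormedAddCommGroup H] [InnerProductSpace ℂ H] [CompleteSpace H]
    (C : H →L[ℂ] H) :
    numRadius (offDiagOp C C) = numRadius C :=
  stmt_14_general C
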